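/- arXiv:2205.09668 — 7 statements merged into one kernel-verified Lean document; each statement's English description precedes it below -/
import Mathlib

section
/- Let V and V' be finite types, let P be a predicate on finite subsets of V and P' a predicate on finite subsets of V', each superset-closed, and assume the full vertex set V is a P-set. If φ is a graph isomorphism from the P-TAR graph to the P'-TAR graph, then every minimal P'-set is a subset of φ(V). -/
/-!
For a superset-closed `P`, the `P`-TAR graph is an isometric subgraph of the hypercube: the
distance between two `P`-sets `S, T` is `|S ∆ T|`, since one can always walk by adding a token
of `S ∆ T`. Count the neighbours of a vertex `S` that are strictly closer to a base vertex `T`: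
they are the sets `S ∆ {a}` with `a ∈ S ∆ T` that are still `P`-sets. All of `T \ S` qualifies,
and nothing from `S \ T` does when `T = V` (trivially) or when `S` is minimal.

Let `A = φ⁻¹(Y')` and `U' = φ(V)`. From the top vertex `V`, `A` has `|V \ A| = dist(V, A)` closer
neighbours, while `Y'` has `|U' \ Y'|` closer neighbours and `dist(U', Y') = |U' \ Y'| + |Y' \ U'|`.
Both quantities are invariant under `φ`, so `Y' \ U' = ∅`.
-/

/-- The TAR (token addition/removal) graph of a predicate `P` on finite subsets of `V`:
vertices are the `P`-sets, two `P`-sets being adjacent iff their symmetric difference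
has exactly one element. -/
def tarGraph {V : Type*} [DecidableEq V] (P : Finset V → Prop) :
    SimpleGraph {S : Finset V // P S} where
  Adj S T := (symmDiff S.1 T.1).card = 1
  symm := ⟨by intro S T h; rwa [symmDiff_comm]⟩
  loopless := ⟨by intro S h; simp [symmDiff_self] at h⟩

/-- `S` is a minimal `P`-set: `S` is a `P`-set and no proper subset of `S` is a `P`-set. -/
def IsMinimalPSet {V : Type*} (P : Finset V → Prop) (S : Finset V) : Prop :=
  P S ∧ ∀ T : Finset V, T ⊂ S → ¬ P T

/-- `R` is `P`-irrelevant: no minimal `P`-set contains any vertex of `R`. -/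
def IsIrrelevant {V : Type*} (P : Finset V → Prop) (R : Finset V) : Prop :=
  ∀ S : Finset V, IsMinimalPSet P S → ∀ v ∈ R, v ∉ S

open Finset SimpleGraph
open scoped symmDiff

namespace Finset

variable {α : Type*} [DecidableEq α] {s t : Finset α} {a : α}

theorem symmDiff_singleton_of_mem (h : a ∈ s) : s ∆ {a} = s.erase a := by
  ext b
  by_cases hb : b = a <;> simp [mem_symmDiff, hb, h]

theorem symmDiff_singleton_of_notMem (h : a ∉ s) : s ∆ {a} = insert a s := by
  ext b
  by_cases hb : b = a <;> simp [mem_symmDiff, hb, h]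

theorem subset_symmDiff_singleton_of_notMem (h : a ∉ s) : s ⊆ s ∆ {a} := by
  rw [symmDiff_singleton_of_notMem h]
  exact subset_insert _ _

theorem card_symmDiff_singleton_of_mem (h : a ∈ s) : (s ∆ {a}).card = s.card - 1 := by
  rw [symmDiff_singleton_of_mem h, card_erase_of_mem h]

theorem card_symmDiff_singleton_lt_iff : (s ∆ {a}).card < s.card ↔ a ∈ s := by
  by_cases h : a ∈ s
  · simp [card_symmDiff_singleton_of_mem h, card_pos.2 ⟨a, h⟩, h]
  · simp [symmDiff_singleton_of_notMem h, card_insert_of_notMem h, h]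

theorem card_symmDiff_eq_one_iff : (s ∆ t).card = 1 ↔ ∃ a, t = s ∆ {a} := by
  rw [card_eq_one]
  refine exists_congr fun a => ⟨fun h => ?_, fun h => ?_⟩
  · rw [← h, symmDiff_symmDiff_cancel_left]
  · rw [h, symmDiff_symmDiff_cancel_left]

theorem card_symmDiff : (s ∆ t).card = (s \ t).card + (t \ s).card :=
  card_union_of_disjoint disjoint_sdiff_sdiff

end Finset

namespace SimpleGraph

variable {V W : Type*} {G : SimpleGraph V} {H : SimpleGraph W}

def closerNeighborSet (G : SimpleGraph V) (u v : V) : Set V :=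
  {w | G.Adj v w ∧ G.dist u w < G.dist u v}

theorem Iso.dist_map_le (φ : G ≃g H) (u v : V) : H.dist (φ u) (φ v) ≤ G.dist u v := by
  by_cases h : G.Reachable u v
  · obtain ⟨p, hp⟩ := h.exists_walk_length_eq_dist
    simpa [hp] using H.dist_le (p.map φ.toHom)
  · rw [dist_eq_zero_of_not_reachable (φ.reachable_iff.not.mpr h)]
    exact Nat.zero_le _

theorem Iso.dist_map (φ : G ≃g H) (u v : V) : H.dist (φ u) (φ v) = G.dist u v :=
  (φ.dist_map_le u v).antisymm (by simpa using φ.symm.dist_map_le (φ u) (φ v))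

theorem Iso.image_closerNeighborSet (φ : G ≃g H) (u v : V) :
    φ '' G.closerNeighborSet u v = H.closerNeighborSet (φ u) (φ v) := by
  ext w
  obtain ⟨x, rfl⟩ := φ.surjective w
  simp [closerNeighborSet, φ.dist_map, φ.map_adj_iff]

theorem Iso.ncard_closerNeighborSet (φ : G ≃g H) (u v : V) :
    (H.closerNeighborSet (φ u) (φ v)).ncard = (G.closerNeighborSet u v).ncard := by
  rw [← φ.image_closerNeighborSet, Set.ncard_image_of_injective _ φ.injective]

end SimpleGraph

namespace tarGraph

variable {V : Type*} [DecidableEq V] {P : Finset V → Prop}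

theorem adj_iff {S T : {S : Finset V // P S}} :
    (tarGraph P).Adj S T ↔ ∃ a, T.1 = S.1 ∆ {a} :=
  card_symmDiff_eq_one_iff

theorem card_symmDiff_le_length {S T : {S : Finset V // P S}} (p : (tarGraph P).Walk S T) :
    (S.1 ∆ T.1).card ≤ p.length := by
  induction p with
  | nil => simp
  | @cons S R T hSR p ih =>
    have hSR : (S.1 ∆ R.1).card = 1 := hSR
    calc (S.1 ∆ T.1).card ≤ (S.1 ∆ R.1 ∪ R.1 ∆ T.1).card := card_le_card (symmDiff_triangle _ _ _)
      _ ≤ (S.1 ∆ R.1).card + (R.1 ∆ T.1).card := card_union_le _ _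
      _ ≤ (Walk.cons _ p).length := by rw [hSR, Walk.length_cons]; omega

theorem exists_walk_length_eq_card_symmDiff (hP : ∀ S T : Finset V, P S → S ⊆ T → P T)
    (S T : {S : Finset V // P S}) : ∃ p : (tarGraph P).Walk S T, p.length = (S.1 ∆ T.1).card := by
  induction hk : (S.1 ∆ T.1).card generalizing S T with
  | zero =>
    obtain rfl : S = T := Subtype.ext (symmDiff_eq_empty.1 (card_eq_zero.1 hk))
    exact ⟨.nil, rfl⟩
  | succ k ih =>
    obtain ⟨a, ha⟩ : (S.1 ∆ T.1).Nonempty := card_pos.1 (by omega)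
    have hk' : ((S.1 ∆ T.1) ∆ {a}).card = k := by rw [card_symmDiff_singleton_of_mem ha, hk]; rfl
    rcases mem_symmDiff.1 ha with ⟨haS, haT⟩ | ⟨haT, haS⟩
    · -- `a ∈ S \ T`: reach `T` from the `P`-set `T ∪ {a}`, which is one token closer to `S`
      let T' : {S : Finset V // P S} :=
        ⟨T.1 ∆ {a}, hP _ _ T.2 (subset_symmDiff_singleton_of_notMem haT)⟩
      obtain ⟨p, hp⟩ := ih S T' (by rw [← hk', symmDiff_assoc])
      have hadj : (tarGraph P).Adj T' T := adj_iff.2 ⟨a, by simp [T']⟩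
      exact ⟨p.concat hadj, by rw [Walk.length_concat, hp]⟩
    · let S' : {S : Finset V // P S} :=
        ⟨S.1 ∆ {a}, hP _ _ S.2 (subset_symmDiff_singleton_of_notMem haS)⟩
      obtain ⟨p, hp⟩ := ih S' T (by rw [← hk', symmDiff_right_comm])
      exact ⟨.cons (adj_iff.2 ⟨a, rfl⟩) p, by rw [Walk.length_cons, hp]⟩

theorem dist_eq (hP : ∀ S T : Finset V, P S → S ⊆ T → P T) (S T : {S : Finset V // P S}) :
    (tarGraph P).dist S T = (S.1 ∆ T.1).card := by
  obtain ⟨p, hp⟩ := exists_walk_length_eq_card_symmDiff hP S T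
  obtain ⟨q, hq⟩ := p.reachable.exists_walk_length_eq_dist
  exact le_antisymm (hp ▸ dist_le p) (hq ▸ card_symmDiff_le_length q)

theorem val_image_closerNeighborSet (hP : ∀ S T : Finset V, P S → S ⊆ T → P T)
    {S T : {S : Finset V // P S}} (hS : ∀ a ∈ S.1 \ T.1, ¬ P (S.1.erase a)) :
    Subtype.val '' (tarGraph P).closerNeighborSet T S = (S.1 ∆ {·}) '' ↑(T.1 \ S.1) := by
  ext R
  constructor
  · rintro ⟨⟨R, hR⟩, ⟨hadj, hlt⟩, rfl⟩
    obtain ⟨a, rfl⟩ := adj_iff.1 hadj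
    rw [dist_eq hP, dist_eq hP, ← symmDiff_assoc] at hlt
    rcases mem_symmDiff.1 (card_symmDiff_singleton_lt_iff.1 hlt) with ha | ⟨haS, haT⟩
    · exact ⟨a, mem_sdiff.2 ha, rfl⟩
    · exact absurd (symmDiff_singleton_of_mem haS ▸ hR) (hS a (mem_sdiff.2 ⟨haS, haT⟩))
  · rintro ⟨a, ha, rfl⟩
    obtain ⟨haT, haS⟩ := mem_sdiff.1 ha
    refine ⟨⟨_, hP _ _ S.2 (subset_symmDiff_singleton_of_notMem haS)⟩,
      ⟨adj_iff.2 ⟨a, rfl⟩, ?_⟩, rfl⟩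
    rw [dist_eq hP, dist_eq hP, ← symmDiff_assoc]
    exact card_symmDiff_singleton_lt_iff.2 (mem_symmDiff.2 (.inl ⟨haT, haS⟩))

theorem ncard_closerNeighborSet (hP : ∀ S T : Finset V, P S → S ⊆ T → P T)
    {S T : {S : Finset V // P S}} (hS : ∀ a ∈ S.1 \ T.1, ¬ P (S.1.erase a)) :
    ((tarGraph P).closerNeighborSet T S).ncard = (T.1 \ S.1).card := by
  rw [← Set.ncard_image_of_injective _ Subtype.val_injective, val_image_closerNeighborSet hP hS,
    Set.ncard_image_of_injective _ fun _ _ h => singleton_injective (symmDiff_right_injective _ h),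
    Set.ncard_coe_finset]

end tarGraph

theorem minimal_subset_image_univ_of_iso_general {V V' : Type*}
    [Fintype V] [DecidableEq V] [DecidableEq V']
    (P : Finset V → Prop) (P' : Finset V' → Prop)
    (hP : ∀ S T : Finset V, P S → S ⊆ T → P T)
    (hP' : ∀ S T : Finset V', P' S → S ⊆ T → P' T)
    (huniv : P Finset.univ)
    (φ : tarGraph P ≃g tarGraph P')
    (Y' : Finset V') (hY' : IsMinimalPSet P' Y') :
    Y' ⊆ (φ ⟨Finset.univ, huniv⟩).1 := by
  let Y : {S : Finset V' // P' S} := ⟨Y', hY'.1⟩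
  have hA : φ (φ.symm Y) = Y := φ.apply_symm_apply Y
  have hdist := φ.dist_map ⟨univ, huniv⟩ (φ.symm Y)
  have hcloser := φ.ncard_closerNeighborSet ⟨univ, huniv⟩ (φ.symm Y)
  rw [hA, tarGraph.dist_eq hP', tarGraph.dist_eq hP, symmDiff_of_ge (subset_univ (φ.symm Y).1),
    card_symmDiff] at hdist
  rw [hA, tarGraph.ncard_closerNeighborSet hP (by simp),
    tarGraph.ncard_closerNeighborSet hP' fun a ha => hY'.2 _ (erase_ssubset (mem_sdiff.1 ha).1)]
    at hcloser
  have hcard : (Y' \ (φ ⟨univ, huniv⟩).1).card = 0 := by simp only [Y] at hdist hcloser; omega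
  exact sdiff_eq_empty_iff_subset.1 (card_eq_zero.1 hcard)

/-- If `P` and `P'` are superset-closed, the full vertex set is a `P`-set, and `φ` is an
isomorphism from the `P`-TAR graph to the `P'`-TAR graph, then every minimal `P'`-set is
contained in `φ(V)`. -/
theorem minimal_subset_image_univ_of_iso {V V' : Type*}
    [Fintype V] [DecidableEq V] [Fintype V'] [DecidableEq V']
    (P : Finset V → Prop) (P' : Finset V' → Prop)
    (hP : ∀ S T : Finset V, P S → S ⊆ T → P T)
    (hP' : ∀ S T : Finset V', P' S → S ⊆ T → P' T)
    (huniv : P Finset.univ)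
    (φ : tarGraph P ≃g tarGraph P')
    (Y' : Finset V') (hY' : IsMinimalPSet P' Y') :
    Y' ⊆ (φ ⟨Finset.univ, huniv⟩).1 :=
  minimal_subset_image_univ_of_iso_general P P' hP hP' huniv φ Y' hY'
end

section
/- Let V and V' be finite nonempty types and let P and P' be X-set properties on finite subsets of V and V' respectively, and suppose φ is a graph isomorphism from the P-TAR graph to the P'-TAR graph. Then |φ(S)| = |S| for every P-set S if and only if there exists a bijection ψ : V → V' such that φ(S) = ψ(S) (the image of S under ψ) for every P-set S of V. -/
/-! A card-preserving isomorphism of TAR graphs maps `S` into `φ (insert v S)` for `v ∉ S`,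
since adjacent sets of different sizes are nested. Comparing `univ` with the co-singletons
`univ \ {v}` gives `|V| = |V'|` and `φ (univ \ {v}) = univ \ {ψ v}` for a bijection `ψ`.
Downward induction on `S` then gives `φ S ⊆ ψ '' S`: for distinct `a, b ∉ S`,
`φ S ⊆ ψ '' (insert a S) ∩ ψ '' (insert b S) = ψ '' S`. Equality follows by counting. -/

open Finset Function
open scoped symmDiff

namespace Finset

variable {α : Type*} [DecidableEq α] {s t : Finset α}

theorem subset_of_card_symmDiff_eq_one (h : #(s ∆ t) = 1) (hst : #s < #t) : s ⊆ t := by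
  rw [symmDiff_def, sup_eq_union, card_union_of_disjoint disjoint_sdiff_sdiff] at h
  have hs := card_sdiff_add_card_inter s t
  have ht := card_sdiff_add_card_inter t s
  rw [inter_comm] at ht
  rw [← sdiff_eq_empty_iff_subset, ← card_eq_zero]
  omega

theorem card_symmDiff_insert_self {a : α} (ha : a ∉ s) : #(s ∆ insert a s) = 1 := by
  rw [symmDiff_of_le (subset_insert a s), insert_sdiff_cancel ha, card_singleton]

variable [Fintype α]

theorem exists_eq_univ_sdiff_singleton_of_card_add_one (hs : #s + 1 = Fintype.card α) :
    ∃ a, s = univ \ {a} := by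
  obtain ⟨a, ha⟩ := card_eq_one.1 (by rw [card_compl]; omega : #sᶜ = 1)
  exact ⟨a, by rw [← compl_eq_univ_sdiff, ← ha, compl_compl]⟩

theorem univ_sdiff_singleton_injective : Injective fun a : α => univ \ {a} := by
  intro a b hab
  simp only [← compl_eq_univ_sdiff] at hab
  exact singleton_injective (compl_injective hab)

end Finset

theorem card_le_card_of_card_preserving {V V' : Type*} [Fintype V] [Fintype V']
    {P : Finset V → Prop} (f : {S : Finset V // P S} → Finset V') (hf : ∀ S, #(f S) = #S.1)
    (huniv : P univ) : Fintype.card V ≤ Fintype.card V' := by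
  simpa [hf] using card_le_univ (f ⟨univ, huniv⟩)

section TarGraph

variable {V V' : Type*} [DecidableEq V] [DecidableEq V'] {P : Finset V → Prop}
  {P' : Finset V' → Prop}

theorem tarGraph_adj_of_eq_insert {S T : {S : Finset V // P S}} {v : V} (hv : v ∉ S.1)
    (hT : T.1 = insert v S.1) : (tarGraph P).Adj S T := by
  change #(S.1 ∆ T.1) = 1
  rw [hT, card_symmDiff_insert_self hv]

theorem SimpleGraph.Hom.tarGraph_apply_subset_of_eq_insert (f : tarGraph P →g tarGraph P')
    (hf : ∀ S, #(f S).1 = #S.1) {S T : {S : Finset V // P S}} {v : V} (hv : v ∉ S.1)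
    (hT : T.1 = insert v S.1) : (f S).1 ⊆ (f T).1 := by
  refine subset_of_card_symmDiff_eq_one (f.map_adj (tarGraph_adj_of_eq_insert hv hT)) ?_
  rw [hf, hf, hT, card_insert_of_notMem hv]
  exact Nat.lt_succ_self _

variable [Fintype V] [Fintype V']

theorem subset_image_of_insert_mono (hP : ∀ S T, P S → S ⊆ T → P T)
    (f : {S : Finset V // P S} → Finset V')
    (hf : ∀ S T v, v ∉ S.1 → T.1 = insert v S.1 → f S ⊆ f T)
    {ψ : V → V'} (hψ : Bijective ψ)
    (hcoatom : ∀ v (h : P (univ \ {v})), f ⟨univ \ {v}, h⟩ = univ \ {ψ v})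
    (S : {S : Finset V // P S}) : f S ⊆ S.1.image ψ := by
  obtain ⟨S, hS⟩ := S
  refine strongDownwardInductionOn (p := fun S => ∀ hS : P S, f ⟨S, hS⟩ ⊆ S.image ψ) S
    (fun S IH _ hS => ?_) (card_le_univ S) hS
  rcases Nat.lt_or_ge 1 #(univ \ S) with h2 | h1
  · obtain ⟨a, ha, b, hb, hab⟩ := one_lt_card.1 h2
    rw [mem_sdiff] at ha hb
    have hstep : ∀ c ∉ S, f ⟨S, hS⟩ ⊆ (insert c S).image ψ := fun c hc =>
      (hf ⟨S, hS⟩ ⟨insert c S, hP _ _ hS (subset_insert c S)⟩ c hc rfl).trans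
        (IH (card_le_univ _) (ssubset_insert hc) _)
    calc f ⟨S, hS⟩ ⊆ (insert a S).image ψ ∩ (insert b S).image ψ :=
          subset_inter (hstep a ha.2) (hstep b hb.2)
      _ = S.image ψ := by
        rw [← image_inter _ _ hψ.1, insert_inter_of_notMem (by simp [hab, ha.2]),
          inter_eq_left.2 (subset_insert b S)]
  · rcases Nat.le_one_iff_eq_zero_or_eq_one.1 h1 with h0 | h1
    · rw [card_eq_zero, sdiff_eq_empty_iff_subset, univ_subset_iff] at h0
      subst h0
      rw [image_univ_of_surjective hψ.2]
      exact subset_univ _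
    · obtain ⟨v, hv⟩ := card_eq_one.1 h1
      obtain rfl : S = univ \ {v} := by rw [← hv, Finset.sdiff_sdiff_eq_self (subset_univ S)]
      rw [hcoatom, image_sdiff _ _ hψ.1, image_univ_of_surjective hψ.2, image_singleton]

theorem eq_image_of_insert_mono (hP : ∀ S T, P S → S ⊆ T → P T)
    (f : {S : Finset V // P S} → Finset V') (hcard : ∀ S, #(f S) = #S.1)
    (hf : ∀ S T v, v ∉ S.1 → T.1 = insert v S.1 → f S ⊆ f T)
    {ψ : V → V'} (hψ : Bijective ψ)
    (hcoatom : ∀ v (h : P (univ \ {v})), f ⟨univ \ {v}, h⟩ = univ \ {ψ v})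
    (S : {S : Finset V // P S}) : f S = S.1.image ψ :=
  eq_of_subset_of_card_le (subset_image_of_insert_mono hP f hf hψ hcoatom S)
    (by rw [card_image_of_injective _ hψ.1, hcard])

end TarGraph

theorem card_preserving_iff_induced_by_bijection_general {V V' : Type*}
    [Fintype V] [DecidableEq V] [Nonempty V]
    [Fintype V'] [DecidableEq V'] [Nonempty V']
    (P : Finset V → Prop) (P' : Finset V' → Prop)
    (hP1 : ∀ S T : Finset V, P S → S ⊆ T → P T)
    (hP3 : ∀ v : V, P (Finset.univ \ {v}))
    (hP'1 : ∀ S T : Finset V', P' S → S ⊆ T → P' T)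
    (hP'3 : ∀ v : V', P' (Finset.univ \ {v}))
    (φ : tarGraph P ≃g tarGraph P') :
    (∀ S : {S : Finset V // P S}, (φ S).1.card = S.1.card)
      ↔ ∃ ψ : V ≃ V', ∀ S : {S : Finset V // P S}, (φ S).1 = S.1.image ψ := by
  refine ⟨fun hcard => ?_, fun ⟨ψ, hψ⟩ S => by rw [hψ S, card_image_of_injective _ ψ.injective]⟩
  have hPuniv : P univ := hP1 _ _ (hP3 (Classical.arbitrary V)) (subset_univ _)
  have hP'univ : P' univ := hP'1 _ _ (hP'3 (Classical.arbitrary V')) (subset_univ _)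
  have hcard_symm (T : {S : Finset V' // P' S}) : #(φ.symm T).1 = #T.1 := by
    simpa using (hcard (φ.symm T)).symm
  have hVV' : Fintype.card V = Fintype.card V' :=
    (card_le_card_of_card_preserving _ hcard hPuniv).antisymm
      (card_le_card_of_card_preserving _ hcard_symm hP'univ)
  have hcoatom (v : V) : ∃ w, (φ ⟨univ \ {v}, hP3 v⟩).1 = univ \ {w} :=
    exists_eq_univ_sdiff_singleton_of_card_add_one <| by
      rw [hcard, card_univ_sdiff, card_singleton, ← hVV']
      exact Nat.sub_add_cancel Fintype.card_pos
  choose ψ hψ using hcoatom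
  have hψ_inj : Injective ψ := fun a b hab => univ_sdiff_singleton_injective <|
    congrArg Subtype.val <| φ.injective <| Subtype.ext <| (hψ a).trans (hab ▸ (hψ b).symm)
  have hψ_bij : Bijective ψ := (Fintype.bijective_iff_injective_and_card ψ).2 ⟨hψ_inj, hVV'⟩
  refine ⟨Equiv.ofBijective ψ hψ_bij, eq_image_of_insert_mono hP1 (fun S => (φ S).1) hcard
    (fun S T _ hv hT => φ.toHom.tarGraph_apply_subset_of_eq_insert hcard hv hT) hψ_bij
    (fun v _ => hψ v)⟩

/-- Let `P`, `P'` be X-set properties and `φ` an isomorphism from the `P`-TAR graph to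
the `P'`-TAR graph. Then `|φ(S)| = |S|` for every `P`-set `S` iff there is a bijection
`ψ : V → V'` with `φ(S) = ψ(S)` for every `P`-set `S`. -/
theorem card_preserving_iff_induced_by_bijection {V V' : Type*}
    [Fintype V] [DecidableEq V] [Nonempty V]
    [Fintype V'] [DecidableEq V'] [Nonempty V']
    (P : Finset V → Prop) (P' : Finset V' → Prop)
    (hP1 : ∀ S T : Finset V, P S → S ⊆ T → P T)
    (hP2 : ¬ P ∅)
    (hP3 : ∀ v : V, P (Finset.univ \ {v}))
    (hP'1 : ∀ S T : Finset V', P' S → S ⊆ T → P' T)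
    (hP'2 : ¬ P' ∅)
    (hP'3 : ∀ v : V', P' (Finset.univ \ {v}))
    (φ : tarGraph P ≃g tarGraph P') :
    (∀ S : {S : Finset V // P S}, (φ S).1.card = S.1.card)
      ↔ ∃ ψ : V ≃ V', ∀ S : {S : Finset V // P S}, (φ S).1 = S.1.image ψ :=
  card_preserving_iff_induced_by_bijection_general P P' hP1 hP3 hP'1 hP'3 φ
end

section
/- Let V and V' be finite nonempty types and let P and P' be X-set properties on finite subsets of V and V' respectively. Suppose φ is a graph isomorphism from the P-TAR graph to the P'-TAR graph such that |φ(S)| = |S| for every P-set S. Then φ maps minimal P-sets to minimal P'-sets of the same size: if S is a minimal P-set of V, then φ(S) is a minimal P'-set of V'. -/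
/-!
If `φ S` were not minimal, upward closure of `P'` would make `φ S` minus a single vertex a
`P'`-set; it is a TAR-neighbour of `φ S` of smaller size. Its preimage is then a TAR-neighbour
of `S` of smaller size, and a neighbour of smaller size is `S` minus a single vertex, so it is a
`P`-set properly contained in `S`.
-/

open Finset

section

variable {V : Type*} [DecidableEq V] {P : Finset V → Prop}

theorem isMinimalPSet_iff_forall_erase (hP : ∀ S T : Finset V, P S → S ⊆ T → P T)
    {S : Finset V} : IsMinimalPSet P S ↔ P S ∧ ∀ v ∈ S, ¬ P (S.erase v) := by
  refine and_congr_right fun _ => ⟨fun h v hv => h _ (erase_ssubset hv), fun h T hT hPT => ?_⟩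
  obtain ⟨v, hvS, hvT⟩ := exists_of_ssubset hT
  exact h v hvS (hP T _ hPT fun x hx => mem_erase.2 ⟨fun hxv => hvT (hxv ▸ hx), hT.1 hx⟩)

theorem tarGraph_adj_erase {S : {S : Finset V // P S}} {v : V} (hv : v ∈ S.1)
    (hP : P (S.1.erase v)) : (tarGraph P).Adj S ⟨S.1.erase v, hP⟩ := by
  change #(symmDiff S.1 (S.1.erase v)) = 1
  rw [symmDiff_of_ge (erase_subset v S.1), sdiff_erase_self hv, card_singleton]

theorem ssubset_of_tarGraph_adj_of_card_lt {S T : {S : Finset V // P S}}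
    (hadj : (tarGraph P).Adj S T) (hlt : #T.1 < #S.1) : T.1 ⊂ S.1 := by
  have hsymm : #(S.1 \ T.1) + #(T.1 \ S.1) = 1 := by
    rw [← card_union_of_disjoint disjoint_sdiff_sdiff, ← sup_eq_union, ← symmDiff_def]
    exact hadj
  have hST : ¬ S.1 ⊆ T.1 := fun h => (card_le_card h).not_gt hlt
  have hTS : T.1 \ S.1 = ∅ := by
    have := (sdiff_nonempty.2 hST).card_pos
    exact card_eq_zero.1 (by omega)
  exact ssubset_of_subset_not_subset (sdiff_eq_empty_iff_subset.1 hTS) hST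

end

theorem iso_maps_minimal_to_minimal_general {V V' : Type*}
    [DecidableEq V]
    [DecidableEq V']
    (P : Finset V → Prop) (P' : Finset V' → Prop)
    (hP'1 : ∀ S T : Finset V', P' S → S ⊆ T → P' T)
    (φ : tarGraph P ≃g tarGraph P')
    (hcard : ∀ S : {S : Finset V // P S}, (φ S).1.card = S.1.card)
    (S : {S : Finset V // P S}) (hS : IsMinimalPSet P S.1) :
    IsMinimalPSet P' (φ S).1 ∧ (φ S).1.card = S.1.card := by
  refine ⟨(isMinimalPSet_iff_forall_erase hP'1).2 ⟨(φ S).2, fun v hv hPv => ?_⟩, hcard S⟩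
  set T := φ.symm ⟨_, hPv⟩
  have hadj : (tarGraph P).Adj S T := by
    simpa using φ.symm.map_adj_iff.2 (tarGraph_adj_erase hv hPv)
  have hlt : #T.1 < #S.1 := by
    rw [← hcard T, φ.apply_symm_apply, ← hcard S]
    exact card_erase_lt_of_mem hv
  exact hS.2 _ (ssubset_of_tarGraph_adj_of_card_lt hadj hlt) T.2

/-- Let `P`, `P'` be X-set properties and `φ` an isomorphism from the `P`-TAR graph to
the `P'`-TAR graph with `|φ(S)| = |S|` for every `P`-set `S`. Then `φ` maps minimal
`P`-sets to minimal `P'`-sets of the same size. -/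
theorem iso_maps_minimal_to_minimal {V V' : Type*}
    [Fintype V] [DecidableEq V] [Nonempty V]
    [Fintype V'] [DecidableEq V'] [Nonempty V']
    (P : Finset V → Prop) (P' : Finset V' → Prop)
    (hP1 : ∀ S T : Finset V, P S → S ⊆ T → P T)
    (hP2 : ¬ P ∅)
    (hP3 : ∀ v : V, P (Finset.univ \ {v}))
    (hP'1 : ∀ S T : Finset V', P' S → S ⊆ T → P' T)
    (hP'2 : ¬ P' ∅)
    (hP'3 : ∀ v : V', P' (Finset.univ \ {v}))
    (φ : tarGraph P ≃g tarGraph P')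
    (hcard : ∀ S : {S : Finset V // P S}, (φ S).1.card = S.1.card)
    (S : {S : Finset V // P S}) (hS : IsMinimalPSet P S.1) :
    IsMinimalPSet P' (φ S).1 ∧ (φ S).1.card = S.1.card :=
  iso_maps_minimal_to_minimal_general P P' hP'1 φ hcard S hS
end

section
/- Let V₁ and V₂ be finite types, let P₁ and P₂ be predicates on finite subsets of V₁ and V₂ respectively, and define the predicate P on finite subsets of the disjoint union V₁ ⊕ V₂ by: S is a P-set if and only if the part of S lying in V₁ is a P₁-set and the part of S lying in V₂ is a P₂-set. Then the P-TAR graph is isomorphic to the Cartesian (box) product of the P₁-TAR graph and the P₂-TAR graph. -/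
open Finset
open scoped symmDiff

namespace Finset

variable {α β : Type*} [DecidableEq α] [DecidableEq β]

lemma toLeft_symmDiff (u v : Finset (α ⊕ β)) : (u ∆ v).toLeft = u.toLeft ∆ v.toLeft := by
  ext; simp [symmDiff_def]

lemma toRight_symmDiff (u v : Finset (α ⊕ β)) : (u ∆ v).toRight = u.toRight ∆ v.toRight := by
  ext; simp [symmDiff_def]

lemma card_symmDiff_eq_one_iff_toLeft_toRight {u v : Finset (α ⊕ β)} :
    #(u ∆ v) = 1 ↔
      #(u.toLeft ∆ v.toLeft) = 1 ∧ u.toRight = v.toRight ∨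
        #(u.toRight ∆ v.toRight) = 1 ∧ u.toLeft = v.toLeft := by
  rw [← card_toLeft_add_card_toRight, toLeft_symmDiff, toRight_symmDiff, Nat.add_eq_one_iff]
  simp only [card_eq_zero, symmDiff_eq_empty]
  tauto

end Finset

def tarVertexSumEquiv {V₁ V₂ : Type*} (P₁ : Finset V₁ → Prop) (P₂ : Finset V₂ → Prop) :
    {S : Finset (V₁ ⊕ V₂) // P₁ S.toLeft ∧ P₂ S.toRight} ≃ {S // P₁ S} × {S // P₂ S} :=
  (sumEquiv.toEquiv.subtypeEquiv fun _ => Iff.rfl).trans Equiv.subtypeProdEquivProd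

theorem tar_disjoint_union_boxProd_general {V₁ V₂ : Type*}
    [DecidableEq V₁] [DecidableEq V₂]
    (P₁ : Finset V₁ → Prop) (P₂ : Finset V₂ → Prop) :
    Nonempty
      (tarGraph (fun S : Finset (V₁ ⊕ V₂) => P₁ S.toLeft ∧ P₂ S.toRight)
        ≃g (tarGraph P₁ □ tarGraph P₂)) := by
  refine ⟨⟨tarVertexSumEquiv P₁ P₂, fun {S T} => ?_⟩⟩
  rw [SimpleGraph.boxProd_adj, Subtype.ext_iff, Subtype.ext_iff]
  exact card_symmDiff_eq_one_iff_toLeft_toRight (u := S.1) (v := T.1) |>.symm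

/-- If `P` on finite subsets of `V₁ ⊕ V₂` is defined by "the part in `V₁` is a `P₁`-set
and the part in `V₂` is a `P₂`-set", then the `P`-TAR graph is isomorphic to the
Cartesian (box) product of the `P₁`-TAR graph and the `P₂`-TAR graph. -/
theorem tar_disjoint_union_boxProd {V₁ V₂ : Type*}
    [Fintype V₁] [DecidableEq V₁] [Fintype V₂] [DecidableEq V₂]
    (P₁ : Finset V₁ → Prop) (P₂ : Finset V₂ → Prop) :
    Nonempty
      (tarGraph (fun S : Finset (V₁ ⊕ V₂) => P₁ S.toLeft ∧ P₂ S.toRight)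
        ≃g (tarGraph P₁ □ tarGraph P₂)) :=
  tar_disjoint_union_boxProd_general P₁ P₂
end

section
/- Let n ≥ 4 and let u and v be distinct vertices of the cycle C_n that are not adjacent in C_n. Then a set S of vertices is a zero forcing set of C_n if and only if S is a zero forcing set of the graph C_n + uv obtained from C_n by adding the edge uv. Consequently the two graphs have exactly the same zero forcing sets and equal zero forcing TAR graphs. -/
/-- A set `B` is forcing-closed in `G` if no vertex of `B` has exactly one neighbor
outside `B` (i.e. no force can be performed from `B`). The zero forcing closure of `S`
is the smallest forcing-closed set containing `S`. -/
def ZFClosed {V : Type*} (G : SimpleGraph V) (B : Finset V) : Prop :=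
  ∀ v ∈ B, ¬ ∃! w : V, G.Adj v w ∧ w ∉ B

/-- `S` is a zero forcing set of `G`: the zero forcing closure of `S` is all of `V`,
equivalently every forcing-closed set containing `S` is all of `V`. -/
def IsZeroForcingSet {V : Type*} [Fintype V] (G : SimpleGraph V) (S : Finset V) : Prop :=
  ∀ B : Finset V, S ⊆ B → ZFClosed G B → B = Finset.univ

/-!
A set is zero forcing in `C_n`, and in `C_n + uv`, exactly when it contains two consecutive
vertices. If it contains none, it is itself forcing-closed: each of its vertices has two cycle
neighbours outside it. If it contains `a, a + 1`, a proper forcing-closed superset `B` contains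
a run of consecutive vertices through `a, a + 1` with two distinct ends; each end has exactly one
cycle neighbour outside `B`, so it can only be stuck through a chord leading out of `B`, and a
single chord cannot do this for both ends.
-/

open SimpleGraph Fin.CommRing

theorem Fin.forall_of_forall_step {n : ℕ} [NeZero n] {p : Fin n → Prop}
    (step : ∀ w, p (w - 1) → p w → p (w + 1)) {a : Fin n} (h₀ : p a) (h₁ : p (a + 1))
    (x : Fin n) : p x := by
  have key : ∀ k : ℕ, p (a + k) ∧ p (a + k + 1) := by
    intro k
    induction k with
    | zero => simpa using ⟨h₀, h₁⟩
    | succ k ih =>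
      have := step (a + k + 1) (by simpa using ih.1) ih.2
      exact ⟨by simpa [add_assoc] using ih.2, by simpa [add_assoc] using this⟩
  simpa using (key (x - a).val).1

theorem Fin.sub_one_ne_add_one {n : ℕ} (v : Fin (n + 3)) : v - 1 ≠ v + 1 := by
  rw [ne_eq, sub_eq_iff_eq_add, add_assoc, left_eq_add]
  exact ne_of_beq_false rfl

section Ends

variable {n : ℕ} [NeZero n] {B : Finset (Fin n)} {a : Fin n}

theorem Finset.exists_right_end (hB : B ≠ Finset.univ) (ha : a ∈ B) (ha' : a + 1 ∈ B) :
    ∃ w, w - 1 ∈ B ∧ w ∈ B ∧ w + 1 ∉ B := by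
  by_contra! h
  exact hB (Finset.eq_univ_iff_forall.2 (Fin.forall_of_forall_step h ha ha'))

theorem Finset.exists_left_end (hB : B ≠ Finset.univ) (ha : a ∈ B) (ha' : a + 1 ∈ B) :
    ∃ w, w + 1 ∈ B ∧ w ∈ B ∧ w - 1 ∉ B := by
  by_contra! h
  refine hB (Finset.eq_univ_iff_forall.2 fun x => ?_)
  -- propagate along the reflected cycle `x ↦ -x`
  have := Fin.forall_of_forall_step (p := fun x => -x ∈ B) (a := -(a + 1)) (x := -x)
    (fun w h₁ h₂ => by
      simpa [sub_eq_neg_add, add_comm] using h (-w) (by simpa [neg_add_eq_sub] using h₁) h₂)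
    (by simpa using ha') (by simpa using ha)
  simpa using this

end Ends

theorem ZFClosed.exists_adj_notMem_ne {V : Type*} {G : SimpleGraph V} {B : Finset V}
    (hB : ZFClosed G B) {w y : V} (hw : w ∈ B) (hwy : G.Adj w y) (hy : y ∉ B) :
    ∃ z, G.Adj w z ∧ z ∉ B ∧ z ≠ y := by
  by_contra! h
  exact hB w hw ⟨y, ⟨hwy, hy⟩, fun z ⟨hwz, hz⟩ => h z hwz hz⟩

namespace SimpleGraph

variable {n : ℕ}

theorem cycleGraph_adj_iff_eq_sub_one_or_eq_add_one {v w : Fin (n + 2)} :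
    (cycleGraph (n + 2)).Adj v w ↔ w = v - 1 ∨ w = v + 1 := by
  rw [← mem_neighborSet, cycleGraph_neighborSet]
  rfl

section CycleWithChord

variable {G : SimpleGraph (Fin (n + 3))} {e : Sym2 (Fin (n + 3))} {B S : Finset (Fin (n + 3))}

theorem zfClosed_of_forall_add_one_notMem (hC : cycleGraph (n + 3) ≤ G)
    (hS : ∀ a ∈ S, a + 1 ∉ S) : ZFClosed G S := by
  rintro a ha ⟨w, -, huniq⟩
  have hpred : a - 1 ∉ S := fun h => hS _ h (by simpa using ha)
  exact Fin.sub_one_ne_add_one a <|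
    (huniq _ ⟨hC (by simp [cycleGraph_adj_iff_eq_sub_one_or_eq_add_one]), hpred⟩).trans
      (huniq _ ⟨hC (by simp [cycleGraph_adj_iff_eq_sub_one_or_eq_add_one]), hS a ha⟩).symm

variable (hC : cycleGraph (n + 3) ≤ G) (hG : G ≤ cycleGraph (n + 3) ⊔ fromEdgeSet {e})
include hC hG

/-- `hend` says that exactly one cycle neighbour of `w` lies outside `B`. -/
theorem ZFClosed.exists_notMem_eq_of_end (hB : ZFClosed G B) {w : Fin (n + 3)} (hw : w ∈ B)
    (hend : w - 1 ∈ B ↔ w + 1 ∉ B) : ∃ z ∉ B, s(w, z) = e := by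
  obtain ⟨y, hy, hwy, hother⟩ : ∃ y ∉ B, (cycleGraph (n + 3)).Adj w y ∧
      ∀ z, (cycleGraph (n + 3)).Adj w z → z ∉ B → z = y := by
    simp only [cycleGraph_adj_iff_eq_sub_one_or_eq_add_one]
    by_cases h : w + 1 ∈ B
    · exact ⟨w - 1, by tauto, by simp, by rintro z (rfl | rfl) hz <;> tauto⟩
    · exact ⟨w + 1, h, by simp, by rintro z (rfl | rfl) hz <;> tauto⟩
  obtain ⟨z, hwz, hz, hzy⟩ := hB.exists_adj_notMem_ne hw (hC hwy) hy
  rcases hG hwz with hcyc | hchord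
  · exact absurd (hother z hcyc hz) hzy
  · exact ⟨z, hz, (fromEdgeSet_adj _).1 hchord |>.1⟩

theorem ZFClosed.eq_univ_of_add_one_mem (hB : ZFClosed G B) {a : Fin (n + 3)} (ha : a ∈ B)
    (ha' : a + 1 ∈ B) : B = Finset.univ := by
  by_contra hne
  obtain ⟨w₁, hw₁, hw₁B, hw₁'⟩ := Finset.exists_right_end hne ha ha'
  obtain ⟨w₂, hw₂', hw₂B, hw₂⟩ := Finset.exists_left_end hne ha ha'
  obtain ⟨z₁, -, he₁⟩ := hB.exists_notMem_eq_of_end hC hG hw₁B (by tauto)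
  obtain ⟨z₂, hz₂, he₂⟩ := hB.exists_notMem_eq_of_end hC hG hw₂B (by tauto)
  rcases Sym2.eq_iff.1 (he₁.trans he₂.symm) with ⟨rfl, -⟩ | ⟨rfl, -⟩
  · exact hw₁' hw₂'
  · exact hz₂ hw₁B

theorem isZeroForcingSet_iff_exists_add_one_mem :
    IsZeroForcingSet G S ↔ ∃ a ∈ S, a + 1 ∈ S := by
  constructor
  · intro hS
    by_contra! hind
    have := hS S subset_rfl (zfClosed_of_forall_add_one_notMem hC hind)
    exact hind 0 (by simp [this]) (by simp [this])
  · rintro ⟨a, ha, ha'⟩ B hSB hB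
    exact hB.eq_univ_of_add_one_mem hC hG (hSB ha) (hSB ha')

end CycleWithChord

end SimpleGraph

theorem zfs_cycle_eq_zfs_cycle_add_chord_general (n : ℕ) (hn : 4 ≤ n) (u v : Fin n) :
    (∀ S : Finset (Fin n),
        IsZeroForcingSet (SimpleGraph.cycleGraph n) S ↔
        IsZeroForcingSet
          (SimpleGraph.cycleGraph n ⊔ SimpleGraph.fromEdgeSet {s(u, v)}) S) ∧
    IsZeroForcingSet (SimpleGraph.cycleGraph n) =
      IsZeroForcingSet
        (SimpleGraph.cycleGraph n ⊔ SimpleGraph.fromEdgeSet {s(u, v)}) := by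
  obtain ⟨m, rfl⟩ : ∃ m, n = m + 3 := ⟨n - 3, by omega⟩
  have key (S : Finset (Fin (m + 3))) :
      IsZeroForcingSet (cycleGraph (m + 3)) S ↔
        IsZeroForcingSet (cycleGraph (m + 3) ⊔ fromEdgeSet {s(u, v)}) S := by
    rw [isZeroForcingSet_iff_exists_add_one_mem (e := s(u, v)) le_rfl le_sup_left,
      isZeroForcingSet_iff_exists_add_one_mem le_sup_left le_rfl]
  exact ⟨key, funext fun S => propext (key S)⟩

/-- For `n ≥ 4` and nonadjacent distinct vertices `u, v` of the cycle `C_n`, a set `S`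
is a zero forcing set of `C_n` iff it is a zero forcing set of `C_n + uv`; consequently
the two graphs have exactly the same zero forcing sets. -/
theorem zfs_cycle_eq_zfs_cycle_add_chord (n : ℕ) (hn : 4 ≤ n) (u v : Fin n)
    (huv : u ≠ v) (hadj : ¬ (SimpleGraph.cycleGraph n).Adj u v) :
    (∀ S : Finset (Fin n),
        IsZeroForcingSet (SimpleGraph.cycleGraph n) S ↔
        IsZeroForcingSet
          (SimpleGraph.cycleGraph n ⊔ SimpleGraph.fromEdgeSet {s(u, v)}) S) ∧
    IsZeroForcingSet (SimpleGraph.cycleGraph n) =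
      IsZeroForcingSet
        (SimpleGraph.cycleGraph n ⊔ SimpleGraph.fromEdgeSet {s(u, v)}) :=
  zfs_cycle_eq_zfs_cycle_add_chord_general n hn u v
end

section
/- Let r ≥ 2 and let G be a simple graph on at least 3 vertices with no isolated vertices. If the zero forcing TAR graph of G is isomorphic to the Cartesian (box) product K_{1,r} □ K₂, then G is isomorphic to the star K_{1,r}. -/
/-! The full vertex set `V` is a zero forcing set whose TAR-neighbours are exactly the sets
`V - v`, all zero forcing because `G` has no isolated vertices. Its degree `|V| ≥ 3` sends it to
a vertex `(c, i)` at the centre `c` of the star, so `|V| = r + 1`; one `V - v₀` sits at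
`(c, i + 1)` and every other `V - v` at a leaf `(ℓ, i)`. Chasing the 4-cycles
`(c, i) (ℓ, i) (ℓ, i + 1) (c, i + 1)` shows that every `V - {v₀, u}` is zero forcing, while no
`V - {u, v}` with `u, v ≠ v₀` is, since two leaves at level `i` have no common neighbour besides
`(c, i)`. But `V - {u, v}` is zero forcing iff `u` and `v` are not twins, and a graph in which
`v₀` is the twin of nobody while any two other vertices are twins is the star centred at `v₀`. -/

open Finset SimpleGraph

def AreTwins {V : Type*} (G : SimpleGraph V) (u v : V) : Prop :=
  ∀ x, x ≠ u → x ≠ v → (G.Adj x u ↔ G.Adj x v)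

lemma eq_starGraph_of_areTwins {V : Type*} {G : SimpleGraph V} {v₀ : V} (hv₀ : ∃ w, G.Adj v₀ w)
    (hnt : ∀ u ≠ v₀, ¬ AreTwins G v₀ u)
    (ht : ∀ u v, u ≠ v₀ → v ≠ v₀ → u ≠ v → AreTwins G u v) :
    G = starGraph v₀ := by
  obtain ⟨w₀, hw₀⟩ := hv₀
  have hcenter : ∀ u ≠ v₀, G.Adj v₀ u := by
    intro u hu
    by_cases huw : u = w₀
    · exact huw ▸ hw₀
    · exact (ht w₀ u hw₀.ne' hu (Ne.symm huw) v₀ hw₀.ne hu.symm).mp hw₀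
  have hleaves : ∀ u v, u ≠ v₀ → v ≠ v₀ → ¬ G.Adj u v := by
    intro u v hu hv huv
    obtain ⟨x, hxv₀, hxu, hx⟩ : ∃ x, x ≠ v₀ ∧ x ≠ u ∧ ¬(G.Adj x v₀ ↔ G.Adj x u) := by
      simpa [AreTwins] using hnt u hu
    have hxu' : ¬ G.Adj x u := fun h => hx (iff_of_true (hcenter x hxv₀).symm h)
    by_cases hxv : x = v
    · exact hxu' (hxv ▸ huv.symm)
    · exact hxu' ((ht v x hv hxv₀ (Ne.symm hxv) u huv.ne hxu.symm).mp huv).symm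
  ext a b
  rw [starGraph_adj]
  constructor
  · intro hab
    refine ⟨hab.ne, ?_⟩
    by_contra! h
    exact hleaves a b h.1 h.2 hab
  · rintro ⟨hab, rfl | rfl⟩
    · exact hcenter b hab.symm
    · exact (hcenter a hab).symm

lemma nonempty_starGraph_iso_completeBipartiteGraph {V : Type*} [Fintype V] [DecidableEq V]
    {c : V} {r : ℕ} (h : Fintype.card V = r + 1) :
    Nonempty (starGraph c ≃g completeBipartiteGraph (Fin 1) (Fin r)) := by
  have e₁ : {v // v = c} ≃ Fin 1 := Fintype.equivFinOfCardEq (Fintype.card_subtype_eq c)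
  have e₂ : {v // v ≠ c} ≃ Fin r := Fintype.equivFinOfCardEq (by
    rw [Fintype.card_subtype_compl, Fintype.card_subtype_eq, h, Nat.add_sub_cancel])
  have e₀ : starGraph c ≃g completeBipartiteGraph {v // v = c} {v // v ≠ c} := by
    refine ⟨(Equiv.sumCompl (· = c)).symm, fun {a b} => ?_⟩
    by_cases ha : a = c <;> by_cases hb : b = c <;> simp [ha, hb, Ne.symm]
  exact ⟨e₀.trans (completeBipartiteGraphCongr e₁ e₂)⟩

lemma isZeroForcingSet_univ {V : Type*} [Fintype V] (G : SimpleGraph V) :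
    IsZeroForcingSet G univ :=
  fun _ hB _ => univ_subset_iff.mp hB

lemma notMem_univ_erase_erase_iff {V : Type*} [Fintype V] [DecidableEq V] {u v y : V} :
    y ∉ (univ.erase u).erase v ↔ y = u ∨ y = v := by
  simp only [mem_erase, mem_univ, and_true, not_and, not_not]
  tauto

section ZeroForcing

variable {V : Type*} [Fintype V] [DecidableEq V] (G : SimpleGraph V)

lemma IsZeroForcingSet.of_force {S : Finset V} {x w : V} (hx : x ∈ S) (hw : G.Adj x w ∧ w ∉ S)
    (huniq : ∀ y, G.Adj x y ∧ y ∉ S → y = w) (h : IsZeroForcingSet G (insert w S)) :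
    IsZeroForcingSet G S := by
  intro B hSB hB
  refine h B (insert_subset ?_ hSB) hB
  by_contra hwB
  exact hB x (hSB hx) ⟨w, ⟨hw.1, hwB⟩, fun y hy => huniq y ⟨hy.1, fun hyS => hy.2 (hSB hyS)⟩⟩

lemma isZeroForcingSet_univ_erase {v : V} (hv : ∃ w, G.Adj v w) :
    IsZeroForcingSet G (univ.erase v) := by
  obtain ⟨w, hvw⟩ := hv
  refine IsZeroForcingSet.of_force G (mem_erase.mpr ⟨hvw.ne', mem_univ w⟩)
    ⟨hvw.symm, notMem_erase v univ⟩ (fun y hy => by simpa using hy.2) ?_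
  rw [insert_erase (mem_univ v)]
  exact isZeroForcingSet_univ G

lemma existsUnique_adj_notMem_univ_erase_erase_iff {u v : V} (huv : u ≠ v) (x : V) :
    (∃! w, G.Adj x w ∧ w ∉ (univ.erase u).erase v) ↔ ¬ (G.Adj x u ↔ G.Adj x v) := by
  simp only [notMem_univ_erase_erase_iff]
  constructor
  · rintro ⟨w, ⟨hw, rfl | rfl⟩, huniq⟩ h
    · exact huv (huniq v ⟨h.mp hw, .inr rfl⟩).symm
    · exact huv (huniq u ⟨h.mpr hw, .inl rfl⟩)
  · intro h
    by_cases hu : G.Adj x u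
    · refine ⟨u, ⟨hu, .inl rfl⟩, fun y ⟨hy, hyuv⟩ => hyuv.resolve_right ?_⟩
      rintro rfl
      exact h (iff_of_true hu hy)
    · have hv : G.Adj x v := by tauto
      refine ⟨v, ⟨hv, .inr rfl⟩, fun y ⟨hy, hyuv⟩ => hyuv.resolve_left ?_⟩
      rintro rfl
      exact hu hy

lemma zfClosed_univ_erase_erase_iff {u v : V} (huv : u ≠ v) :
    ZFClosed G ((univ.erase u).erase v) ↔ AreTwins G u v := by
  unfold ZFClosed AreTwins
  simp_rw [existsUnique_adj_notMem_univ_erase_erase_iff G huv, not_not, mem_erase, mem_univ,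
    and_true]
  exact forall_congr' fun x => ⟨fun h hu hv => h ⟨hv, hu⟩, fun h ⟨hv, hu⟩ => h hu hv⟩

lemma isZeroForcingSet_univ_erase_erase_iff {u v : V} (hu : ∃ w, G.Adj u w)
    (hv : ∃ w, G.Adj v w) (huv : u ≠ v) :
    IsZeroForcingSet G ((univ.erase u).erase v) ↔ ¬ AreTwins G u v := by
  rw [← zfClosed_univ_erase_erase_iff G huv]
  constructor
  · intro hS hcl
    have hu' := hS _ subset_rfl hcl ▸ mem_univ u
    simp at hu'
  · intro hcl
    simp only [ZFClosed, not_forall, not_not] at hcl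
    obtain ⟨x, hx, w, hw, huniq⟩ := hcl
    refine IsZeroForcingSet.of_force G hx hw huniq ?_
    rcases notMem_univ_erase_erase_iff.mp hw.2 with rfl | rfl
    · rw [erase_right_comm, insert_erase (mem_erase.mpr ⟨huv, mem_univ w⟩)]
      exact isZeroForcingSet_univ_erase G hv
    · rw [insert_erase (mem_erase.mpr ⟨huv.symm, mem_univ w⟩)]
      exact isZeroForcingSet_univ_erase G hu

end ZeroForcing

section TarGraph

variable {W : Type*} [DecidableEq W] {P : Finset W → Prop}

lemma tarGraph_adj_iff {S T : {S // P S}} :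
    (tarGraph P).Adj S T ↔ ∃ x, T.1 = symmDiff S.1 {x} := by
  refine card_eq_one.trans (exists_congr fun x => ⟨fun h => ?_, fun h => ?_⟩)
  · rw [← h, symmDiff_symmDiff_cancel_left]
  · rw [h, symmDiff_symmDiff_cancel_left]

lemma tarGraph_adj_of_val_eq_univ [Fintype W] {S T : {S // P S}} (hS : S.1 = univ) :
    (tarGraph P).Adj S T ↔ ∃ v, T.1 = univ.erase v := by
  rw [tarGraph_adj_iff, hS]
  refine exists_congr fun x => ?_
  rw [show symmDiff univ {x} = univ.erase x by ext; simp [mem_symmDiff]]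

lemma tarGraph_adj_of_val_eq_univ_erase [Fintype W] {S T : {S // P S}} {v : W}
    (hS : S.1 = univ.erase v) :
    (tarGraph P).Adj S T ↔ T.1 = univ ∨ ∃ u ≠ v, T.1 = (univ.erase v).erase u := by
  rw [tarGraph_adj_iff, hS]
  constructor
  · rintro ⟨x, hx⟩
    by_cases hxv : x = v
    · subst hxv
      left
      rw [hx]
      ext y; by_cases h : y = x <;> simp [mem_symmDiff, h]
    · right
      refine ⟨x, hxv, hx.trans ?_⟩
      ext y; by_cases h : y = x <;> simp [mem_symmDiff, h, hxv]
  · rintro (hT | ⟨u, huv, hT⟩)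
    · refine ⟨v, hT.trans ?_⟩
      ext y; by_cases h : y = v <;> simp [mem_symmDiff, h]
    · refine ⟨u, hT.trans ?_⟩
      ext y; by_cases h : y = u <;> simp [mem_symmDiff, h, huv]

end TarGraph

section StarBoxK2

variable {α β : Type*}

lemma neighborSet_completeBipartiteGraph_boxProd_top_inl (a : α) (i : Fin 2) :
    (completeBipartiteGraph α β □ (⊤ : SimpleGraph (Fin 2))).neighborSet (.inl a, i) =
      insert (.inl a, i + 1) (Set.range fun b => (.inr b, i)) := by
  ext ⟨c | c, j⟩ <;> fin_cases i <;> fin_cases j <;> simp [boxProd_adj, eq_comm]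

lemma neighborSet_completeBipartiteGraph_boxProd_top_inr (b : β) (i : Fin 2) :
    (completeBipartiteGraph α β □ (⊤ : SimpleGraph (Fin 2))).neighborSet (.inr b, i) =
      insert (.inr b, i + 1) (Set.range fun a => (.inl a, i)) := by
  ext ⟨c | c, j⟩ <;> fin_cases i <;> fin_cases j <;> simp [boxProd_adj, eq_comm]

lemma card_neighborSet_completeBipartiteGraph_boxProd_top_inl [Finite β] (a : α) (i : Fin 2) :
    Nat.card ((completeBipartiteGraph α β □ (⊤ : SimpleGraph (Fin 2))).neighborSet (.inl a, i)) =
      Nat.card β + 1 := by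
  rw [neighborSet_completeBipartiteGraph_boxProd_top_inl, Nat.card_coe_set_eq,
    Set.ncard_insert_of_notMem (by simp), Set.ncard_range_of_injective]
  intro b b' h
  simpa using h

lemma card_neighborSet_completeBipartiteGraph_boxProd_top_inr [Finite α] (b : β) (i : Fin 2) :
    Nat.card ((completeBipartiteGraph α β □ (⊤ : SimpleGraph (Fin 2))).neighborSet (.inr b, i)) =
      Nat.card α + 1 := by
  rw [neighborSet_completeBipartiteGraph_boxProd_top_inr, Nat.card_coe_set_eq,
    Set.ncard_insert_of_notMem (by simp), Set.ncard_range_of_injective]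
  intro b b' h
  simpa using h

lemma exists_eq_inl_of_adj_inr_of_adj_inr {b b' : β} (hbb' : b ≠ b') {i : Fin 2}
    {p : (α ⊕ β) × Fin 2}
    (hb : (completeBipartiteGraph α β □ (⊤ : SimpleGraph (Fin 2))).Adj (.inr b, i) p)
    (hb' : (completeBipartiteGraph α β □ (⊤ : SimpleGraph (Fin 2))).Adj (.inr b', i) p) :
    ∃ a, p = (.inl a, i) := by
  rw [← mem_neighborSet, neighborSet_completeBipartiteGraph_boxProd_top_inr] at hb hb'
  rcases hb with rfl | ⟨a, rfl⟩
  · simp [hbb'] at hb'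
  · exact ⟨a, rfl⟩

end StarBoxK2

section TarGraphIso

variable {W : Type*} [Fintype W] [DecidableEq W] {P : Finset W → Prop}
  (hP : P univ) (hP' : ∀ v, P (univ.erase v)) {r : ℕ}
  (e : tarGraph P ≃g completeBipartiteGraph (Fin 1) (Fin r) □ (⊤ : SimpleGraph (Fin 2)))

include hP' in
lemma card_neighborSet_tarGraph_univ :
    Nat.card ((tarGraph P).neighborSet ⟨univ, hP⟩) = Fintype.card W := by
  have hrange :
      (tarGraph P).neighborSet ⟨univ, hP⟩ = Set.range fun v => ⟨univ.erase v, hP' v⟩ := by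
    ext T
    rw [mem_neighborSet, tarGraph_adj_of_val_eq_univ (S := ⟨univ, hP⟩) rfl]
    simp only [Set.mem_range, Subtype.ext_iff, eq_comm]
  rw [hrange, Nat.card_coe_set_eq, Set.ncard_range_of_injective, Nat.card_eq_fintype_card]
  intro u v h
  exact (erase_inj univ (mem_univ u)).mp (congrArg Subtype.val h)

include hP' in
lemma exists_tarGraph_iso_univ_eq_inl (hcard : 3 ≤ Fintype.card W) :
    ∃ i, e ⟨univ, hP⟩ = (.inl 0, i) := by
  have hcardW := (Nat.card_congr (e.mapNeighborSet ⟨univ, hP⟩)).symm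
  rw [card_neighborSet_tarGraph_univ hP hP'] at hcardW
  rcases hU : e ⟨univ, hP⟩ with ⟨a | j, i⟩
  · exact ⟨i, by rw [Subsingleton.elim a 0]⟩
  · rw [hU, card_neighborSet_completeBipartiteGraph_boxProd_top_inr, Nat.card_eq_fintype_card,
      Fintype.card_fin] at hcardW
    omega

include hP' in
lemma card_eq_of_tarGraph_iso_univ_eq_inl {i : Fin 2} (hU : e ⟨univ, hP⟩ = (.inl 0, i)) :
    Fintype.card W = r + 1 := by
  rw [← card_neighborSet_tarGraph_univ hP hP', Nat.card_congr (e.mapNeighborSet _), hU,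
    card_neighborSet_completeBipartiteGraph_boxProd_top_inl, Nat.card_eq_fintype_card,
    Fintype.card_fin]

lemma exists_tarGraph_iso_univ_erase_eq {i : Fin 2} (hU : e ⟨univ, hP⟩ = (.inl 0, i)) :
    ∃ v₀, e ⟨univ.erase v₀, hP' v₀⟩ = (.inl 0, i + 1) ∧
      ∀ v ≠ v₀, ∃ j, e ⟨univ.erase v, hP' v⟩ = (.inr j, i) := by
  have hadj : (tarGraph P).Adj ⟨univ, hP⟩ (e.symm (.inl 0, i + 1)) := by
    rw [← e.map_adj_iff, hU, e.apply_symm_apply, ← mem_neighborSet,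
      neighborSet_completeBipartiteGraph_boxProd_top_inl]
    exact Set.mem_insert _ _
  obtain ⟨v₀, hv₀⟩ := (tarGraph_adj_of_val_eq_univ rfl).mp hadj
  have he₀ : e ⟨univ.erase v₀, hP' v₀⟩ = (.inl 0, i + 1) := by
    rw [← show e.symm (.inl 0, i + 1) = ⟨univ.erase v₀, hP' v₀⟩ from Subtype.ext hv₀,
      e.apply_symm_apply]
  refine ⟨v₀, he₀, fun v hv => ?_⟩
  have hmem : e ⟨univ.erase v, hP' v⟩ ∈ (completeBipartiteGraph (Fin 1) (Fin r) □
      (⊤ : SimpleGraph (Fin 2))).neighborSet (.inl 0, i) := by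
    rw [mem_neighborSet, ← hU, e.map_adj_iff, tarGraph_adj_of_val_eq_univ rfl]
    exact ⟨v, rfl⟩
  rw [neighborSet_completeBipartiteGraph_boxProd_top_inl] at hmem
  rcases hmem with h | ⟨j, hj⟩
  · rw [← he₀] at h
    exact absurd ((erase_inj univ (mem_univ v)).mp (congrArg Subtype.val (e.injective h))) hv
  · exact ⟨j, hj.symm⟩

lemma univ_erase_erase_of_tarGraph_iso {i : Fin 2} {v₀ : W} (hU : e ⟨univ, hP⟩ = (.inl 0, i))
    (he₀ : e ⟨univ.erase v₀, hP' v₀⟩ = (.inl 0, i + 1))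
    (hleaf : ∀ v ≠ v₀, ∃ j, e ⟨univ.erase v, hP' v⟩ = (.inr j, i)) {u : W} (hu : u ≠ v₀) :
    P ((univ.erase v₀).erase u) := by
  obtain ⟨j, hj⟩ := hleaf u hu
  set X := e.symm (.inr j, i + 1)
  have hXu : (tarGraph P).Adj ⟨univ.erase u, hP' u⟩ X := by
    rw [← e.map_adj_iff, hj, e.apply_symm_apply, ← mem_neighborSet,
      neighborSet_completeBipartiteGraph_boxProd_top_inr]
    exact Set.mem_insert _ _
  have hXv₀ : (tarGraph P).Adj ⟨univ.erase v₀, hP' v₀⟩ X := by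
    rw [← e.map_adj_iff, he₀, e.apply_symm_apply, ← mem_neighborSet,
      neighborSet_completeBipartiteGraph_boxProd_top_inl]
    exact Set.mem_insert_of_mem _ ⟨j, rfl⟩
  have hXU : X.1 ≠ univ := fun h => by
    have := congrArg e (Subtype.ext h : X = ⟨univ, hP⟩)
    rw [e.apply_symm_apply, hU] at this
    simp at this
  obtain ⟨w, -, hw⟩ := ((tarGraph_adj_of_val_eq_univ_erase rfl).mp hXv₀).resolve_left hXU
  obtain ⟨w', -, hw'⟩ := ((tarGraph_adj_of_val_eq_univ_erase rfl).mp hXu).resolve_left hXU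
  have huw : u = w := by
    have hu' : u ∉ X.1 := by simp [hw']
    simpa [hw, hu] using hu'
  rw [huw, ← hw]
  exact X.2

lemma not_univ_erase_erase_of_tarGraph_iso {i : Fin 2} {v₀ : W} (hU : e ⟨univ, hP⟩ = (.inl 0, i))
    (hleaf : ∀ v ≠ v₀, ∃ j, e ⟨univ.erase v, hP' v⟩ = (.inr j, i)) {u v : W} (hu : u ≠ v₀)
    (hv : v ≠ v₀) (huv : u ≠ v) :
    ¬ P ((univ.erase u).erase v) := by
  intro hX
  set X : {S // P S} := ⟨(univ.erase u).erase v, hX⟩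
  obtain ⟨ju, hju⟩ := hleaf u hu
  obtain ⟨jv, hjv⟩ := hleaf v hv
  have hj : ju ≠ jv := by
    rintro rfl
    rw [← hjv] at hju
    exact huv ((erase_inj univ (mem_univ u)).mp (congrArg Subtype.val (e.injective hju)))
  have hXu : (tarGraph P).Adj ⟨univ.erase u, hP' u⟩ X :=
    (tarGraph_adj_of_val_eq_univ_erase rfl).mpr (.inr ⟨v, huv.symm, rfl⟩)
  have hXv : (tarGraph P).Adj ⟨univ.erase v, hP' v⟩ X :=
    (tarGraph_adj_of_val_eq_univ_erase rfl).mpr (.inr ⟨u, huv, erase_right_comm⟩)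
  rw [← e.map_adj_iff, hju] at hXu
  rw [← e.map_adj_iff, hjv] at hXv
  obtain ⟨a, ha⟩ := exists_eq_inl_of_adj_inr_of_adj_inr hj hXu hXv
  have hXU : X = ⟨univ, hP⟩ := e.injective (by rw [ha, hU, Subsingleton.elim a 0])
  simpa [X] using congrArg (u ∈ ·.1) hXU

include hP hP' e in
lemma exists_center_of_tarGraph_iso (hcard : 3 ≤ Fintype.card W) :
    ∃ v₀, Fintype.card W = r + 1 ∧ (∀ u ≠ v₀, P ((univ.erase v₀).erase u)) ∧
      ∀ u v, u ≠ v₀ → v ≠ v₀ → u ≠ v → ¬ P ((univ.erase u).erase v) := by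
  obtain ⟨i, hU⟩ := exists_tarGraph_iso_univ_eq_inl hP hP' e hcard
  obtain ⟨v₀, he₀, hleaf⟩ := exists_tarGraph_iso_univ_erase_eq hP hP' e hU
  exact ⟨v₀, card_eq_of_tarGraph_iso_univ_eq_inl hP hP' e hU,
    fun u hu => univ_erase_erase_of_tarGraph_iso hP hP' e hU he₀ hleaf hu,
    fun u v hu hv huv => not_univ_erase_erase_of_tarGraph_iso hP hP' e hU hleaf hu hv huv⟩

end TarGraphIso

theorem star_of_zTar_iso_star_boxProd_general {W : Type*} [Fintype W] [DecidableEq W]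
    (G : SimpleGraph W) (r : ℕ) (hcard : 3 ≤ Fintype.card W)
    (hnoiso : ∀ v : W, ∃ w : W, G.Adj v w)
    (h : Nonempty
      (tarGraph (IsZeroForcingSet G)
        ≃g (completeBipartiteGraph (Fin 1) (Fin r) □ (⊤ : SimpleGraph (Fin 2))))) :
    Nonempty (G ≃g completeBipartiteGraph (Fin 1) (Fin r)) := by
  obtain ⟨e⟩ := h
  obtain ⟨v₀, hcardW, hzf, hnzf⟩ := exists_center_of_tarGraph_iso (isZeroForcingSet_univ G)
    (fun v => isZeroForcingSet_univ_erase G (hnoiso v)) e hcard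
  have hstar : G = starGraph v₀ := eq_starGraph_of_areTwins (hnoiso v₀)
    (fun u hu => (isZeroForcingSet_univ_erase_erase_iff G (hnoiso v₀) (hnoiso u) hu.symm).mp
      (hzf u hu))
    (fun u v hu hv huv => not_not.mp fun hnt => hnzf u v hu hv huv
      ((isZeroForcingSet_univ_erase_erase_iff G (hnoiso u) (hnoiso v) huv).mpr hnt))
  rw [hstar]
  exact nonempty_starGraph_iso_completeBipartiteGraph hcardW

/-- For `r ≥ 2`, if `G` is a graph on at least 3 vertices with no isolated vertices
whose zero forcing TAR graph is isomorphic to `K_{1,r} □ K₂`, then `G ≅ K_{1,r}`. -/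
theorem star_of_zTar_iso_star_boxProd {W : Type*} [Fintype W] [DecidableEq W]
    (G : SimpleGraph W) (r : ℕ) (hr : 2 ≤ r) (hcard : 3 ≤ Fintype.card W)
    (hnoiso : ∀ v : W, ∃ w : W, G.Adj v w)
    (h : Nonempty
      (tarGraph (IsZeroForcingSet G)
        ≃g (completeBipartiteGraph (Fin 1) (Fin r) □ (⊤ : SimpleGraph (Fin 2))))) :
    Nonempty (G ≃g completeBipartiteGraph (Fin 1) (Fin r)) :=
  star_of_zTar_iso_star_boxProd_general G r hcard hnoiso h
end

section
/- Let G be a finite simple graph containing a set T of pairwise twin vertices with |T| ≥ 3, let u ∈ T, and let G_u denote the induced subgraph of G on V(G) \ {u}. If the induced subgraph of the zero forcing TAR graph of G_u on zero forcing sets of cardinality at most k is connected, then the induced subgraph of the zero forcing TAR graph of G on zero forcing sets of cardinality at most k+1 is connected. -/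
/-- The `k`-TAR graph: the induced subgraph of the TAR graph of `P` on the
`P`-sets of cardinality at most `k`. -/
def tarGraphLe {V : Type*} [DecidableEq V] (P : Finset V → Prop) (k : ℕ) :
    SimpleGraph {S : Finset V // P S ∧ S.card ≤ k} where
  Adj S T := (symmDiff S.1 T.1).card = 1
  symm := ⟨by intro S T h; rwa [symmDiff_comm]⟩
  loopless := ⟨by intro S h; simp [symmDiff_self] at h⟩

/-! Adding `u` back is a graph homomorphism from the `k`-TAR graph of `G - u` to the
`(k+1)`-TAR graph of `G`, so it suffices to join every zero forcing set `S` with `|S| ≤ k + 1`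
to a set containing `u`. A zero forcing set misses at most one vertex of a twin class, so when
`u ∈ S` it contains a twin of `u` and `S \ {u}` still forces `G - u`. When `u ∉ S` and
`|S| ≤ k`, add `u`. When `|S| = k + 1`, swapping `u` with a twin `t ∈ S` and deleting `u`
gives a zero forcing set of `G - u` of size `k`; by connectivity it has a neighbour in the
`k`-TAR graph, necessarily obtained by removing a vertex, and swapping back yields `x ∈ S`
with `S \ {x}` zero forcing. -/

section

variable {V W : Type*}

theorem zfClosed_map_iff {G : SimpleGraph V} {G' : SimpleGraph W} (e : G ≃g G') (B : Finset V) :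
    ZFClosed G' (B.map e.toEquiv.toEmbedding) ↔ ZFClosed G B := by
  unfold ZFClosed
  simp only [Finset.forall_mem_map]
  refine forall₂_congr fun v _ => not_congr ?_
  exact (e.toEquiv.existsUnique_congr fun w =>
    and_congr e.map_adj_iff.symm (Finset.mem_map' _).not.symm).symm

theorem IsZeroForcingSet.map_iso [Fintype V] [Fintype W] {G : SimpleGraph V} {G' : SimpleGraph W}
    (e : G ≃g G') {S : Finset V} (hS : IsZeroForcingSet G S) :
    IsZeroForcingSet G' (S.map e.toEquiv.toEmbedding) := by
  intro B hSB hB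
  set B' := B.map e.symm.toEquiv.toEmbedding
  have hB' : B = B'.map e.toEquiv.toEmbedding := by simp [B', Finset.map_map]
  rw [hB'] at hSB hB ⊢
  rw [hS B' (Finset.map_subset_map.1 hSB) ((zfClosed_map_iff e _).1 hB), Finset.map_univ_equiv]

theorem IsZeroForcingSet.mono [Fintype V] {G : SimpleGraph V} {S S' : Finset V}
    (hS : IsZeroForcingSet G S) (h : S ⊆ S') : IsZeroForcingSet G S' :=
  fun B hB hcl => hS B (h.trans hB) hcl

theorem IsZeroForcingSet.mem_or_mem_of_neighborSet_eq [Fintype V] [DecidableEq V]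
    {G : SimpleGraph V} {S : Finset V} {t₁ t₂ : V} (hS : IsZeroForcingSet G S) (h₁₂ : t₁ ≠ t₂)
    (h : G.neighborSet t₁ = G.neighborSet t₂) : t₁ ∈ S ∨ t₂ ∈ S := by
  by_contra! hS'
  have hadj : ∀ v, G.Adj v t₁ ↔ G.Adj v t₂ := fun v => by
    rw [G.adj_comm, ← G.mem_neighborSet, h, G.mem_neighborSet, G.adj_comm]
  -- no vertex can force into `{t₁, t₂}`: it sees both twins or neither
  have hB : ZFClosed G (Finset.univ \ {t₁, t₂}) := by
    rintro v - ⟨w, ⟨hvw, hw⟩, huniq⟩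
    have hw' : w = t₁ ∨ w = t₂ := by simpa [or_iff_not_imp_left] using hw
    rcases hw' with rfl | rfl
    · exact h₁₂ (huniq t₂ ⟨(hadj v).1 hvw, by simp⟩).symm
    · exact h₁₂ (huniq t₁ ⟨(hadj v).2 hvw, by simp⟩)
  have huniv := hS _ (fun x hx => by aesop) hB
  have ht₁ : t₁ ∈ Finset.univ \ {t₁, t₂} := by rw [huniv]; exact Finset.mem_univ t₁
  simp at ht₁

theorem SimpleGraph.neighborSet_swap {G : SimpleGraph V} [DecidableEq V] {u t : V}
    (h : G.neighborSet u = G.neighborSet t) (x : V) :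
    G.neighborSet (Equiv.swap u t x) = G.neighborSet x := by
  rw [Equiv.swap_apply_def]
  split_ifs <;> subst_vars
  exacts [h.symm, h, rfl]

theorem SimpleGraph.adj_swap_iff {G : SimpleGraph V} [DecidableEq V] {u t : V}
    (h : G.neighborSet u = G.neighborSet t) {x y : V} :
    G.Adj (Equiv.swap u t x) (Equiv.swap u t y) ↔ G.Adj x y := by
  rw [← G.mem_neighborSet, G.neighborSet_swap h, G.mem_neighborSet, G.adj_comm,
    ← G.mem_neighborSet, G.neighborSet_swap h, G.mem_neighborSet, G.adj_comm]

theorem IsZeroForcingSet.map_swap [Fintype V] [DecidableEq V] {G : SimpleGraph V}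
    {S : Finset V} {u t : V} (h : G.neighborSet u = G.neighborSet t) (hS : IsZeroForcingSet G S) :
    IsZeroForcingSet G (S.map (Equiv.swap u t).toEmbedding) :=
  hS.map_iso ⟨Equiv.swap u t, G.adj_swap_iff h⟩

theorem SimpleGraph.Connected.of_hom_of_forall_reachable {G : SimpleGraph V} {H : SimpleGraph W}
    (f : H →g G) (hH : H.Connected) (h : ∀ v, ∃ w, G.Reachable v (f w)) : G.Connected := by
  rw [SimpleGraph.connected_iff]
  refine ⟨fun v₁ v₂ => ?_, hH.nonempty.map f⟩
  obtain ⟨w₁, h₁⟩ := h v₁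
  obtain ⟨w₂, h₂⟩ := h v₂
  exact h₁.trans (((hH.preconnected w₁ w₂).map f).trans h₂.symm)

section TarGraph

variable [DecidableEq V] {P : Finset V → Prop} {k : ℕ}

theorem tarGraphLe_adj_of_eq_erase {S T : {S : Finset V // P S ∧ S.card ≤ k}} {x : V}
    (hx : x ∈ S.1) (hT : T.1 = S.1.erase x) : (tarGraphLe P k).Adj S T := by
  change (symmDiff S.1 T.1).card = 1
  rw [hT, symmDiff_of_ge (Finset.erase_subset x _), Finset.sdiff_erase_self hx,
    Finset.card_singleton]

theorem exists_erase_of_tarGraphLe_connected (hconn : (tarGraphLe P k).Connected)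
    {S T : {S : Finset V // P S ∧ S.card ≤ k}} (hST : S ≠ T) (hS : S.1.card = k) :
    ∃ x ∈ S.1, P (S.1.erase x) := by
  have := nontrivial_of_ne S T hST
  obtain ⟨S', hadj⟩ := hconn.preconnected.exists_adj_of_nontrivial S
  obtain ⟨x, hx⟩ := Finset.card_eq_one.1 hadj
  have hS' : S'.1 = symmDiff S.1 {x} := by rw [← hx, symmDiff_symmDiff_cancel_left]
  by_cases hxS : x ∈ S.1
  · rw [symmDiff_of_ge (Finset.singleton_subset_iff.2 hxS), Finset.sdiff_singleton_eq_erase] at hS'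
    exact ⟨x, hxS, hS' ▸ S'.2.1⟩
  · rw [(Finset.disjoint_singleton_right.2 hxS).symmDiff_eq_sup, Finset.sup_eq_union] at hS'
    have := S'.2.2
    rw [hS', Finset.card_union_of_disjoint (Finset.disjoint_singleton_right.2 hxS),
      Finset.card_singleton, hS] at this
    omega

end TarGraph

section VertexDeletion

variable [DecidableEq V] {u : V}

def reinsert (u : V) (A : Finset {v : V // v ≠ u}) : Finset V :=
  insert u (A.map (Function.Embedding.subtype _))

theorem mem_reinsert_self (A : Finset {v : V // v ≠ u}) : u ∈ reinsert u A :=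
  Finset.mem_insert_self u _

theorem val_mem_reinsert {A : Finset {v : V // v ≠ u}} {x : {v : V // v ≠ u}} :
    x.1 ∈ reinsert u A ↔ x ∈ A := by
  simp [reinsert, x.2]

theorem reinsert_subtype {S : Finset V} (hu : u ∈ S) : reinsert u (S.subtype (· ≠ u)) = S := by
  rw [reinsert, Finset.subtype_map, Finset.filter_ne', Finset.insert_erase hu]

theorem reinsert_subset_reinsert {A B : Finset {v : V // v ≠ u}} (h : A ⊆ B) :
    reinsert u A ⊆ reinsert u B :=
  Finset.insert_subset_insert u (Finset.map_subset_map.2 h)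

theorem card_reinsert (A : Finset {v : V // v ≠ u}) : (reinsert u A).card = A.card + 1 := by
  rw [reinsert, Finset.card_insert_of_notMem (by simp), Finset.card_map]

theorem reinsert_erase (A : Finset {v : V // v ≠ u}) (x : {v : V // v ≠ u}) :
    reinsert u (A.erase x) = (reinsert u A).erase x.1 := by
  rw [reinsert, reinsert, Finset.map_erase, Finset.erase_insert_of_ne (Ne.symm x.2)]
  rfl

theorem symmDiff_reinsert (A B : Finset {v : V // v ≠ u}) :
    symmDiff (reinsert u A) (reinsert u B)
      = (symmDiff A B).map (Function.Embedding.subtype _) := by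
  ext a
  by_cases ha : a = u
  · subst ha; simp [reinsert, Finset.mem_symmDiff]
  · simp [reinsert, Finset.mem_symmDiff, ha]

theorem reinsert_univ [Fintype V] : reinsert u Finset.univ = Finset.univ :=
  Finset.eq_univ_of_forall fun a =>
    if h : a = u then h ▸ mem_reinsert_self _
    else (val_mem_reinsert (x := ⟨a, h⟩)).2 (Finset.mem_univ _)

variable [Fintype V] {G : SimpleGraph V}

theorem isZeroForcingSet_reinsert {A : Finset {v : V // v ≠ u}}
    (hA : IsZeroForcingSet (G.comap (Subtype.val : {v : V // v ≠ u} → V)) A) :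
    IsZeroForcingSet G (reinsert u A) := by
  intro B hAB hB
  have huB : u ∈ B := hAB (mem_reinsert_self A)
  have hB' : ZFClosed (G.comap Subtype.val) (B.subtype (· ≠ u)) := by
    rintro v hv ⟨w, ⟨hvw, hwB⟩, huniq⟩
    rw [Finset.mem_subtype] at hv hwB
    refine hB v hv ⟨w, ⟨hvw, hwB⟩, fun x ⟨hvx, hxB⟩ => ?_⟩
    have hxu : x ≠ u := fun h => hxB (h ▸ huB)
    exact congrArg Subtype.val (huniq ⟨x, hxu⟩ ⟨hvx, by rwa [Finset.mem_subtype]⟩)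
  have hAB' : A ⊆ B.subtype (· ≠ u) := fun x hx =>
    Finset.mem_subtype.2 (hAB (val_mem_reinsert.2 hx))
  rw [← reinsert_subtype huB, hA _ hAB' hB', reinsert_univ]

theorem IsZeroForcingSet.subtype_ne_of_twin {S : Finset V} {t : V} (hS : IsZeroForcingSet G S)
    (hu : u ∈ S) (ht : t ∈ S) (htu : t ≠ u) (h : G.neighborSet u = G.neighborSet t) :
    IsZeroForcingSet (G.comap (Subtype.val : {v : V // v ≠ u} → V)) (S.subtype (· ≠ u)) := by
  intro B' hSB' hB'
  have hB : ZFClosed G (reinsert u B') := by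
    rintro v hv ⟨w, ⟨hvw, hwB⟩, huniq⟩
    have hwu : w ≠ u := fun h => hwB (h ▸ mem_reinsert_self B')
    -- a force from `u` is a force from its twin `t`, which survives the deletion
    obtain ⟨v', hv'B, hv'⟩ : ∃ v' ∈ B', G.neighborSet v'.1 = G.neighborSet v := by
      by_cases hvu : v = u
      · subst hvu
        exact ⟨⟨t, htu⟩, hSB' (Finset.mem_subtype.2 ht), h.symm⟩
      · exact ⟨⟨v, hvu⟩, val_mem_reinsert.1 hv, rfl⟩
    have hadj : ∀ x, G.Adj v'.1 x ↔ G.Adj v x := fun x => by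
      rw [← G.mem_neighborSet, hv', G.mem_neighborSet]
    refine hB' v' hv'B ⟨⟨w, hwu⟩, ⟨(hadj w).2 hvw, fun hw => hwB (val_mem_reinsert.2 hw)⟩,
      fun x ⟨hx, hxB⟩ => Subtype.ext (huniq x ⟨(hadj x).1 hx, fun h => hxB (val_mem_reinsert.1 h)⟩)⟩
  have hSB : S ⊆ reinsert u B' := reinsert_subtype hu ▸ reinsert_subset_reinsert hSB'
  have huniv := hS _ hSB hB
  exact Finset.eq_univ_of_forall fun x => val_mem_reinsert.1 (huniv ▸ Finset.mem_univ x.1)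

end VertexDeletion

section TwinDeletion

variable [Fintype V] [DecidableEq V] {G : SimpleGraph V} {u t₁ t₂ : V} {k : ℕ}

def reinsertHom (G : SimpleGraph V) (u : V) (k : ℕ) :
    tarGraphLe (IsZeroForcingSet (G.comap (Subtype.val : {v : V // v ≠ u} → V))) k →g
      tarGraphLe (IsZeroForcingSet G) (k + 1) where
  toFun A := ⟨reinsert u A.1, isZeroForcingSet_reinsert A.2.1,
    (card_reinsert A.1).trans_le (Nat.succ_le_succ A.2.2)⟩
  map_rel' {A B} hAB := by
    change (symmDiff (reinsert u A.1) (reinsert u B.1)).card = 1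
    rw [symmDiff_reinsert, Finset.card_map]
    exact hAB

theorem exists_reinsertHom_eq (h₁₂ : t₁ ≠ t₂) (hu₁ : t₁ ≠ u) (hu₂ : t₂ ≠ u)
    (h₁ : G.neighborSet u = G.neighborSet t₁) (h₂ : G.neighborSet u = G.neighborSet t₂)
    (S : {S : Finset V // IsZeroForcingSet G S ∧ S.card ≤ k + 1}) (hu : u ∈ S.1) :
    ∃ A, reinsertHom G u k A = S := by
  obtain ⟨t, ht, htu, h⟩ : ∃ t ∈ S.1, t ≠ u ∧ G.neighborSet u = G.neighborSet t := by
    rcases S.2.1.mem_or_mem_of_neighborSet_eq h₁₂ (h₁.symm.trans h₂) with ht | ht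
    exacts [⟨t₁, ht, hu₁, h₁⟩, ⟨t₂, ht, hu₂, h₂⟩]
  have hcard : (S.1.subtype (· ≠ u)).card + 1 ≤ k + 1 := by
    rw [← card_reinsert, reinsert_subtype hu]
    exact S.2.2
  exact ⟨⟨_, S.2.1.subtype_ne_of_twin hu ht htu h, Nat.le_of_succ_le_succ hcard⟩,
    Subtype.ext (reinsert_subtype hu)⟩

theorem IsZeroForcingSet.exists_erase_of_twins
    (hconn : (tarGraphLe
      (IsZeroForcingSet (G.comap (Subtype.val : {v : V // v ≠ u} → V))) k).Connected)
    {S : Finset V} (hS : IsZeroForcingSet G S) (hcard : S.card = k + 1) (hu : u ∉ S)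
    (ht₁ : t₁ ∈ S) (ht₂ : t₂ ∈ S) (h₁₂ : t₁ ≠ t₂)
    (h₁ : G.neighborSet u = G.neighborSet t₁) (h₂ : G.neighborSet u = G.neighborSet t₂) :
    ∃ x ∈ S, IsZeroForcingSet G (S.erase x) := by
  have mem_swap : ∀ {t x}, x ∈ S.map (Equiv.swap u t).toEmbedding ↔ Equiv.swap u t x ∈ S := by
    simp [Finset.mem_map_equiv]
  let A (t : V) := (S.map (Equiv.swap u t).toEmbedding).subtype (· ≠ u)
  have hu_mem : ∀ {t}, t ∈ S → u ∈ S.map (Equiv.swap u t).toEmbedding := fun ht => by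
    rwa [mem_swap, Equiv.swap_apply_left]
  have hA : ∀ {t t'}, t ∈ S → t' ∈ S → t' ≠ t → G.neighborSet u = G.neighborSet t →
      G.neighborSet u = G.neighborSet t' →
      IsZeroForcingSet (G.comap (Subtype.val : {v : V // v ≠ u} → V)) (A t) := by
    intro t t' ht ht' htt' h h'
    have htu : t' ≠ u := ne_of_mem_of_not_mem ht' hu
    refine (hS.map_swap h).subtype_ne_of_twin (hu_mem ht) ?_ htu h'
    rwa [mem_swap, Equiv.swap_apply_of_ne_of_ne htu htt']
  have hcardA : ∀ {t}, t ∈ S → (A t).card = k := fun {t} ht => by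
    have := card_reinsert (A t)
    rw [reinsert_subtype (hu_mem ht), Finset.card_map, hcard] at this
    omega
  let A₁ : {S // _ ∧ Finset.card S ≤ k} := ⟨A t₁, hA ht₁ ht₂ h₁₂.symm h₁ h₂, (hcardA ht₁).le⟩
  let A₂ : {S // _ ∧ Finset.card S ≤ k} := ⟨A t₂, hA ht₂ ht₁ h₁₂ h₂ h₁, (hcardA ht₂).le⟩
  have hne : A₁ ≠ A₂ := fun h => by
    have hu₂ : t₂ ≠ u := ne_of_mem_of_not_mem ht₂ hu
    have ht₂A : (⟨t₂, hu₂⟩ : {v : V // v ≠ u}) ∈ A t₁ := by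
      rwa [Finset.mem_subtype, mem_swap, Equiv.swap_apply_of_ne_of_ne hu₂ h₁₂.symm]
    rw [show A t₁ = A t₂ from congrArg Subtype.val h, Finset.mem_subtype, mem_swap,
      Equiv.swap_apply_right] at ht₂A
    exact hu ht₂A
  obtain ⟨y, hy, hyA⟩ := exists_erase_of_tarGraphLe_connected hconn hne (hcardA ht₁)
  have := (isZeroForcingSet_reinsert hyA).map_swap h₁
  rw [reinsert_erase, reinsert_subtype (hu_mem ht₁), Finset.map_erase, Finset.map_map,
    ← Equiv.trans_toEmbedding, Equiv.swap_swap, Equiv.refl_toEmbedding, Finset.map_refl] at this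
  exact ⟨_, mem_swap.1 (Finset.mem_subtype.1 hy), this⟩

theorem exists_reachable_reinsertHom_of_notMem (h₁₂ : t₁ ≠ t₂) (hu₁ : t₁ ≠ u) (hu₂ : t₂ ≠ u)
    (h₁ : G.neighborSet u = G.neighborSet t₁) (h₂ : G.neighborSet u = G.neighborSet t₂)
    (S : {S : Finset V // IsZeroForcingSet G S ∧ S.card ≤ k + 1}) (hu : u ∉ S.1)
    (hk : S.1.card ≤ k) :
    ∃ A, (tarGraphLe (IsZeroForcingSet G) (k + 1)).Reachable S (reinsertHom G u k A) := by
  obtain ⟨A, hA⟩ := exists_reinsertHom_eq h₁₂ hu₁ hu₂ h₁ h₂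
    ⟨insert u S.1, S.2.1.mono (Finset.subset_insert u _),
      (Finset.card_insert_le u _).trans (Nat.succ_le_succ hk)⟩ (Finset.mem_insert_self u _)
  exact ⟨A, hA ▸ (tarGraphLe_adj_of_eq_erase (Finset.mem_insert_self u _)
    (Finset.erase_insert hu).symm).symm.reachable⟩

theorem exists_reachable_reinsertHom
    (hconn : (tarGraphLe
      (IsZeroForcingSet (G.comap (Subtype.val : {v : V // v ≠ u} → V))) k).Connected)
    (h₁₂ : t₁ ≠ t₂) (hu₁ : t₁ ≠ u) (hu₂ : t₂ ≠ u)
    (h₁ : G.neighborSet u = G.neighborSet t₁) (h₂ : G.neighborSet u = G.neighborSet t₂)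
    (S : {S : Finset V // IsZeroForcingSet G S ∧ S.card ≤ k + 1}) :
    ∃ A, (tarGraphLe (IsZeroForcingSet G) (k + 1)).Reachable S (reinsertHom G u k A) := by
  by_cases hu : u ∈ S.1
  · obtain ⟨A, rfl⟩ := exists_reinsertHom_eq h₁₂ hu₁ hu₂ h₁ h₂ S hu
    exact ⟨A, .rfl⟩
  by_cases hk : S.1.card ≤ k
  · exact exists_reachable_reinsertHom_of_notMem h₁₂ hu₁ hu₂ h₁ h₂ S hu hk
  have ht₁ := (S.2.1.mem_or_mem_of_neighborSet_eq hu₁.symm h₁).resolve_left hu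
  have ht₂ := (S.2.1.mem_or_mem_of_neighborSet_eq hu₂.symm h₂).resolve_left hu
  obtain ⟨x, hx, hxS⟩ := S.2.1.exists_erase_of_twins hconn (by omega) hu ht₁ ht₂ h₁₂ h₁ h₂
  obtain ⟨A, hA⟩ := exists_reachable_reinsertHom_of_notMem h₁₂ hu₁ hu₂ h₁ h₂
    ⟨S.1.erase x, hxS, (Finset.card_erase_le).trans S.2.2⟩
    (fun h => hu (Finset.mem_of_mem_erase h)) (by rw [Finset.card_erase_of_mem hx]; omega)
  exact ⟨A, (tarGraphLe_adj_of_eq_erase hx rfl).reachable.trans hA⟩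

end TwinDeletion

end

/-- Let `G` contain a set `T` of pairwise twins with `|T| ≥ 3`, let `u ∈ T`, and let
`G_u` be the induced subgraph of `G` on `V \ {u}`. If the induced subgraph of the zero
forcing TAR graph of `G_u` on zero forcing sets of cardinality at most `k` is
connected, then the induced subgraph of the zero forcing TAR graph of `G` on zero
forcing sets of cardinality at most `k + 1` is connected. -/
theorem twin_deletion_tar_connected {V : Type*} [Fintype V] [DecidableEq V]
    (G : SimpleGraph V) (T : Finset V) (hT : 3 ≤ T.card)
    (htwin : ∀ v ∈ T, ∀ w ∈ T, v ≠ w → G.neighborSet v = G.neighborSet w)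
    (u : V) (hu : u ∈ T) (k : ℕ)
    (hconn : (tarGraphLe
        (IsZeroForcingSet (G.comap (Subtype.val : {v : V // v ≠ u} → V))) k).Connected) :
    (tarGraphLe (IsZeroForcingSet G) (k + 1)).Connected := by
  have hT' : 1 < (T.erase u).card := by rw [Finset.card_erase_of_mem hu]; omega
  obtain ⟨t₁, ht₁, t₂, ht₂, h₁₂⟩ := Finset.one_lt_card.1 hT'
  rw [Finset.mem_erase] at ht₁ ht₂
  exact hconn.of_hom_of_forall_reachable (reinsertHom G u k) <|
    exists_reachable_reinsertHom hconn h₁₂ ht₁.1 ht₂.1 (htwin u hu t₁ ht₁.2 ht₁.1.symm)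
      (htwin u hu t₂ ht₂.2 ht₂.1.symm)
end
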